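/- Let A, B, P be strings and let 1≤i≤|A|, 1≤j≤|B|, 1≤k≤|P| with A[i]=B[j] and A[i]≠P[k]. Then C(i,j,k) = C(i−1,j−1,k) + 1 (with the convention −∞+1=−∞). -/
import Mathlib


open List Relation

section Defs

variable {V V1 V2 V3 α : Type*}

/-- A (directed) path: a nonempty list of vertices, consecutive ones joined by edges. -/
def IsPath (E : V → V → Prop) (p : List V) : Prop :=
  p ≠ [] ∧ p.Chain' E

/-- Paths ending at `v` (the set `P(v)`). -/
def EndsAt (E : V → V → Prop) (v : V) (p : List V) : Prop :=
  IsPath E p ∧ p.getLast? = some v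

/-- A path is left-maximal if its first vertex has no in-coming edges. -/
def LeftMax (E : V → V → Prop) (p : List V) : Prop :=
  ∀ w u, p.head? = some w → ¬ E u w

/-- A path is right-maximal if its last vertex has no out-going edges. -/
def RightMax (E : V → V → Prop) (p : List V) : Prop :=
  ∀ w u, p.getLast? = some w → ¬ E w u

/-- `Subseq(ℓ(P(v)))`: subsequences of label strings of paths ending at `v`. -/
def SubseqAt (E : V → V → Prop) (ℓ : V → α) (v : V) : Set (List α) :=
  {z | ∃ p, EndsAt E v p ∧ z.Sublist (p.map ℓ)}

/-- `Subseq(ℓ(LMP(v)))`: subsequences of label strings of left-maximal paths ending at `v`. -/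
def SubseqLM (E : V → V → Prop) (ℓ : V → α) (v : V) : Set (List α) :=
  {z | ∃ p, EndsAt E v p ∧ LeftMax E p ∧ z.Sublist (p.map ℓ)}

/-- `Subseq(G)`: subsequences of label strings of all paths of `G`. -/
def SubseqG (E : V → V → Prop) (ℓ : V → α) : Set (List α) :=
  {z | ∃ p, IsPath E p ∧ z.Sublist (p.map ℓ)}

/-- A graph is acyclic if no vertex lies on a nonempty cycle. -/
def Acyclic (E : V → V → Prop) : Prop :=
  ∀ v, ¬ Relation.TransGen E v v

/-- The set `S_IC(v1,v2,v3)`. -/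
def SIC (E1 : V1 → V1 → Prop) (ℓ1 : V1 → α) (E2 : V2 → V2 → Prop) (ℓ2 : V2 → α)
    (E3 : V3 → V3 → Prop) (ℓ3 : V3 → α) (v1 : V1) (v2 : V2) (v3 : V3) :
    Set (List α) :=
  {z | (∃ q, EndsAt E3 v3 q ∧ LeftMax E3 q ∧ (q.map ℓ3).Sublist z) ∧
       z ∈ SubseqAt E1 ℓ1 v1 ∧ z ∈ SubseqAt E2 ℓ2 v2}

/-- Maximum length of a string in `S`, with `⊥` (= −∞) for `S = ∅`. -/
noncomputable def maxLen (S : Set (List α)) : WithBot ℕ :=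
  sSup ((fun z : List α => (z.length : WithBot ℕ)) '' S)

/-- `L(v1,v2)`: the maximum length of a common subsequence (as a natural number). -/
noncomputable def Lval (E1 : V1 → V1 → Prop) (ℓ1 : V1 → α)
    (E2 : V2 → V2 → Prop) (ℓ2 : V2 → α) (v1 : V1) (v2 : V2) : ℕ :=
  sSup {n | ∃ z ∈ SubseqAt E1 ℓ1 v1 ∩ SubseqAt E2 ℓ2 v2, n = z.length}

/-- `D(v1,v2,v3)`: the maximum length of a string in `S_IC(v1,v2,v3)`, `−∞` if empty. -/
noncomputable def Dval (E1 : V1 → V1 → Prop) (ℓ1 : V1 → α) (E2 : V2 → V2 → Prop) (ℓ2 : V2 → α)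
    (E3 : V3 → V3 → Prop) (ℓ3 : V3 → α) (v1 : V1) (v2 : V2) (v3 : V3) : WithBot ℕ :=
  maxLen (SIC E1 ℓ1 E2 ℓ2 E3 ℓ3 v1 v2 v3)

end Defs

/-- `C(i,j,k)`: the maximum length (`⊥` = −∞ if none exists) of a string `z` such
that `P[1..k]` is a subsequence of `z` and `z` is a common subsequence of
`A[1..i]` and `B[1..j]`. -/
noncomputable def Cval {α : Type*} (A B P : List α) (i j k : ℕ) : WithBot ℕ :=
  maxLen {z | (P.take k).Sublist z ∧ z.Sublist (A.take i) ∧ z.Sublist (B.take j)}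

private lemma sub_snoc {α : Type*} {u l : List α} {b : α} (h : u.Sublist (l ++ [b])) :
    u.Sublist l ∨ ∃ u₀, u = u₀ ++ [b] ∧ u₀.Sublist l := by
  rw [List.sublist_append_iff] at h
  obtain ⟨u₁, u₂, rfl, h1, h2⟩ := h
  rcases List.sublist_singleton.mp h2 with rfl | rfl
  · exact Or.inl (by simpa using h1)
  · exact Or.inr ⟨u₁, rfl, h1⟩

private lemma maxLen_rec {α : Type*} (S S' : Set (List α)) (c : α) (N : ℕ)
    (h1 : ∀ z' ∈ S', z' ++ [c] ∈ S)
    (h2 : ∀ z ∈ S, ∃ z' ∈ S', z.length ≤ z'.length + 1)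
    (hb : ∀ z ∈ S', z.length ≤ N) :
    maxLen S = maxLen S' + 1 := by
  rcases S'.eq_empty_or_nonempty with rfl | ⟨z0, hz0⟩
  · have hS : S = ∅ := by
      ext z; simp only [Set.mem_empty_iff_false, iff_false]
      intro hz
      obtain ⟨z', hz', _⟩ := h2 z hz
      exact hz'
    simp [maxLen, hS, WithBot.sSup_empty]
  · set T : Set ℕ := {n | ∃ z ∈ S', z.length = n} with hT
    have hTne : T.Nonempty := ⟨z0.length, z0, hz0, rfl⟩
    have hTbdd : BddAbove T := ⟨N, by rintro n ⟨z, hz, rfl⟩; exact hb z hz⟩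
    obtain ⟨w, hw, hwlen⟩ : ∃ z ∈ S', z.length = sSup T := Nat.sSup_mem hTne hTbdd
    set m := sSup T with hm
    have hmax : ∀ z ∈ S', z.length ≤ m := fun z hz => le_csSup hTbdd ⟨z, hz, rfl⟩
    have e1 : maxLen S' = (m : WithBot ℕ) := by
      unfold maxLen
      apply _root_.le_antisymm
      · apply csSup_le (Set.Nonempty.image _ ⟨z0, hz0⟩)
        rintro x ⟨z, hz, rfl⟩
        show (z.length : WithBot ℕ) ≤ (m : WithBot ℕ)
        exact_mod_cast hmax z hz
      · rw [← hwlen]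
        refine le_csSup ⟨(m : WithBot ℕ), ?_⟩ ⟨w, hw, rfl⟩
        rintro x ⟨z, hz, rfl⟩
        show (z.length : WithBot ℕ) ≤ (m : WithBot ℕ)
        exact_mod_cast hmax z hz
    have e2 : maxLen S = ((m + 1 : ℕ) : WithBot ℕ) := by
      have hmem : w ++ [c] ∈ S := h1 w hw
      have hub : ∀ x ∈ (fun z : List α => (z.length : WithBot ℕ)) '' S, x ≤ ((m + 1 : ℕ) : WithBot ℕ) := by
        rintro x ⟨z, hz, rfl⟩
        show (z.length : WithBot ℕ) ≤ ((m + 1 : ℕ) : WithBot ℕ)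
        obtain ⟨z', hz', hle⟩ := h2 z hz
        exact_mod_cast hle.trans (Nat.add_le_add_right (hmax z' hz') 1)
      unfold maxLen
      apply _root_.le_antisymm
      · exact csSup_le (Set.Nonempty.image _ ⟨w ++ [c], hmem⟩) hub
      · have hlen : ((w ++ [c]).length : WithBot ℕ) = ((m + 1 : ℕ) : WithBot ℕ) := by
          simp [hwlen]
        rw [← hlen]
        exact le_csSup ⟨_, hub⟩ ⟨w ++ [c], hmem, rfl⟩
    rw [e1, e2]
    push_cast
    rfl

/-- If `1 ≤ i ≤ |A|`, `1 ≤ j ≤ |B|`, `1 ≤ k ≤ |P|`, `A[i] = B[j]`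
and `A[i] ≠ P[k]`, then `C(i,j,k) = C(i−1,j−1,k) + 1`
(with the convention `−∞ + 1 = −∞`). -/
theorem stmt4 {α : Type*} (A B P : List α) (i j k : ℕ)
    (hi1 : 1 ≤ i) (hi2 : i ≤ A.length) (hj1 : 1 ≤ j) (hj2 : j ≤ B.length)
    (hk1 : 1 ≤ k) (hk2 : k ≤ P.length)
    (hAB : A.get ⟨i - 1, by omega⟩ = B.get ⟨j - 1, by omega⟩)
    (hAP : A.get ⟨i - 1, by omega⟩ ≠ P.get ⟨k - 1, by omega⟩) :
    Cval A B P i j k = Cval A B P (i - 1) (j - 1) k + 1 := by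
  classical
  have hiA : i - 1 < A.length := by omega
  have hjB : j - 1 < B.length := by omega
  have hkP : k - 1 < P.length := by omega
  set c := A.get ⟨i - 1, hiA⟩ with hc
  have hA : A.take i = A.take (i - 1) ++ [c] := by
    have hi : i = (i - 1) + 1 := by omega
    rw [hi, List.take_succ, List.getElem?_eq_getElem hiA]
    rfl
  have hB : B.take j = B.take (j - 1) ++ [c] := by
    have hj : j = (j - 1) + 1 := by omega
    rw [hj, List.take_succ, List.getElem?_eq_getElem hjB]
    have : c = B[j-1] := hAB
    rw [this]
    rfl
  have hP : P.take k = P.take (k-1) ++ [P.get ⟨k-1, hkP⟩] := by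
    have hk : k = (k - 1) + 1 := by omega
    conv_lhs => rw [hk, List.take_succ, List.getElem?_eq_getElem hkP]
    rfl
  have hPc : ∀ z : List α, (P.take k).Sublist (z ++ [c]) → (P.take k).Sublist z := by
    intro z hs
    rcases sub_snoc hs with h | ⟨u₀, he, hu⟩
    · exact h
    · exfalso
      apply hAP
      have h := congrArg List.getLast? (hP.symm.trans he)
      simp only [List.getLast?_concat] at h
      simpa using h.symm
  set S : Set (List α) :=
    {z | (P.take k).Sublist z ∧ z.Sublist (A.take i) ∧ z.Sublist (B.take j)} with hS
  set S' : Set (List α) :=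
    {z | (P.take k).Sublist z ∧ z.Sublist (A.take (i-1)) ∧ z.Sublist (B.take (j-1))} with hS'
  show maxLen S = maxLen S' + 1
  apply maxLen_rec S S' c i
  · rintro z' ⟨hp, ha, hb⟩
    refine ⟨hp.trans (List.sublist_append_left _ _), ?_, ?_⟩
    · rw [hA]; exact ha.append (List.Sublist.refl [c])
    · rw [hB]; exact hb.append (List.Sublist.refl [c])
  · rintro z ⟨hp, ha, hb⟩
    rw [hA] at ha
    rw [hB] at hb
    rcases sub_snoc ha with ha' | ⟨z₀, rfl, ha'⟩
    · rcases sub_snoc hb with hb' | ⟨z₀, rfl, hb'⟩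
      · exact ⟨z, ⟨hp, ha', hb'⟩, Nat.le_succ _⟩
      · refine ⟨z₀, ⟨hPc z₀ hp, ?_, hb'⟩, by simp⟩
        exact (List.sublist_append_left z₀ [c]).trans ha'
    · rcases sub_snoc hb with hb' | ⟨z₁, he, hb'⟩
      · refine ⟨z₀, ⟨hPc z₀ hp, ha', ?_⟩, by simp⟩
        exact (List.sublist_append_left z₀ [c]).trans hb'
      · have : z₀ = z₁ := by
          have := congrArg List.dropLast he
          simpa using this
        subst this
        exact ⟨z₀, ⟨hPc z₀ hp, ha', hb'⟩, by simp⟩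
  · rintro z ⟨_, ha, _⟩
    calc z.length ≤ (A.take (i-1)).length := ha.length_le
      _ ≤ i := by simp only [List.length_take]; omega
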